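/- Let p ∈ ℝ, q = 1−p, and let c_{jk} (j+k ≤ m) be complex numbers. For w ∈ S(ℝ²) let (A₁w)(s,t) = Σ_{j+k≤m} c_{jk} s^j (D_s^k w)(s,t) (the operator acting in the first variable, D_s = −i∂_s), and let B = Σ_{j+k≤m} c_{jk} (M₁ − qD₂)^j (M₂ + pD₁)^k. Then for every w ∈ S(ℝ²), B(Wig_p[w]) = Wig_p[A₁w]. -/

import Mathlib

open MeasureTheory SchwartzMap Complex Filter

noncomputable section




/-- Upgrade an `ℝ`-linear continuous map between Schwartz spaces to a `ℂ`-linear one,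
given that it commutes with scalar multiplication by complex numbers. -/
def complexifyCLM {E : Type*} [NormedAddCommGroup E] [NormedSpace ℝ E]
    (T : 𝓢(E, ℂ) →L[ℝ] 𝓢(E, ℂ)) (h : ∀ (c : ℂ) (f : 𝓢(E, ℂ)), T (c • f) = c • T f) :
    𝓢(E, ℂ) →L[ℂ] 𝓢(E, ℂ) :=
  { toFun := T
    map_add' := map_add T
    map_smul' := h
    cont := T.cont }

/-- Multiplication by a fixed function of temperate growth, as a continuous `ℂ`-linear map
on Schwartz space. -/
def mulCLM {E : Type*} [NormedAddCommGroup E] [NormedSpace ℝ E]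
    {g : E → ℂ} (hg : g.HasTemperateGrowth) : 𝓢(E, ℂ) →L[ℂ] 𝓢(E, ℂ) :=
  complexifyCLM (SchwartzMap.bilinLeftCLM (ContinuousLinearMap.mul ℝ ℂ) hg)
    (fun c f => by
      ext x
      show ((c • f) x) * g x = c • (f x * g x)
      simp [mul_assoc])

lemma mulCLM_apply {E : Type*} [NormedAddCommGroup E] [NormedSpace ℝ E]
    {g : E → ℂ} (hg : g.HasTemperateGrowth) (f : 𝓢(E, ℂ)) (x : E) :
    mulCLM hg f x = f x * g x := rfl

/-- A Schwartz function has temperate growth. -/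
lemma schwartz_hasTemperateGrowth {E : Type*} [NormedAddCommGroup E] [NormedSpace ℝ E]
    (f : 𝓢(E, ℂ)) : Function.HasTemperateGrowth ⇑f := by
  refine ⟨f.smooth', fun n => ⟨0, (SchwartzMap.seminorm ℝ 0 n) f, fun x => ?_⟩⟩
  simpa using f.norm_iteratedFDeriv_le_seminorm ℝ n x

lemma hasTemperateGrowth_coord1 : Function.HasTemperateGrowth (fun v : ℝ × ℝ => (v.1 : ℂ)) :=
  (Complex.ofRealCLM.comp (ContinuousLinearMap.fst ℝ ℝ ℝ)).hasTemperateGrowth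

lemma hasTemperateGrowth_coord2 : Function.HasTemperateGrowth (fun v : ℝ × ℝ => (v.2 : ℂ)) :=
  (Complex.ofRealCLM.comp (ContinuousLinearMap.snd ℝ ℝ ℝ)).hasTemperateGrowth

lemma hasTemperateGrowth_coord : Function.HasTemperateGrowth (fun x : ℝ => (x : ℂ)) :=
  Complex.ofRealCLM.hasTemperateGrowth

/-- Tempered distributions on `ℝ`. -/
abbrev TD1 : Type := 𝓢(ℝ, ℂ) →L[ℂ] ℂ

/-- Tempered distributions on `ℝ²`. -/
abbrev TD2 : Type := 𝓢(ℝ × ℝ, ℂ) →L[ℂ] ℂ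

/-- The canonical image of a Schwartz function in the tempered distributions,
`φ ↦ (ψ ↦ ∫ φ ψ)`. -/
def toDist1 (f : 𝓢(ℝ, ℂ)) : TD1 :=
  (SchwartzMap.integralCLM ℂ (volume : Measure ℝ)).comp (mulCLM (schwartz_hasTemperateGrowth f))

/-- A tempered distribution on `ℝ` "is" a Schwartz function. -/
def IsSchwartz1 (u : TD1) : Prop := ∃ f : 𝓢(ℝ, ℂ), ∀ ψ : 𝓢(ℝ, ℂ), u ψ = ∫ x : ℝ, f x * ψ x

/-- A tempered distribution on `ℝ²` "is" a Schwartz function. -/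
def IsSchwartz2 (u : TD2) : Prop :=
  ∃ f : 𝓢(ℝ × ℝ, ℂ), ∀ ψ : 𝓢(ℝ × ℝ, ℂ), u ψ = ∫ v : ℝ × ℝ, f v * ψ v

/-- An operator on tempered distributions is regular if `B u` Schwartz implies `u` Schwartz. -/
def IsRegular1 (B : TD1 → TD1) : Prop := ∀ u : TD1, IsSchwartz1 (B u) → IsSchwartz1 u

/-- An operator on tempered distributions on `ℝ²` is regular if `B u` Schwartz implies
`u` Schwartz. -/
def IsRegular2 (B : TD2 → TD2) : Prop := ∀ u : TD2, IsSchwartz2 (B u) → IsSchwartz2 u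

/-- Multiplication by `x`, on tempered distributions on `ℝ`: `⟨xu, φ⟩ = ⟨u, xφ⟩`. -/
def opM (u : TD1) : TD1 := u.comp (mulCLM hasTemperateGrowth_coord)

/-- `D = -i d/dx` on tempered distributions on `ℝ`: `⟨Du, φ⟩ = -⟨u, Dφ⟩`. -/
def opD (u : TD1) : TD1 := Complex.I • (u.comp (LineDeriv.lineDerivOpCLM ℂ 𝓢(ℝ, ℂ) (1 : ℝ)))

/-- Multiplication by the first coordinate on tempered distributions on `ℝ²`. -/
def opM1 (u : TD2) : TD2 := u.comp (mulCLM hasTemperateGrowth_coord1)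

/-- Multiplication by the second coordinate on tempered distributions on `ℝ²`. -/
def opM2 (u : TD2) : TD2 := u.comp (mulCLM hasTemperateGrowth_coord2)

/-- `D₁ = -i ∂ₓ` on tempered distributions on `ℝ²`. -/
def opD1 (u : TD2) : TD2 := Complex.I • (u.comp (LineDeriv.lineDerivOpCLM ℂ 𝓢(ℝ × ℝ, ℂ) ((1, 0) : ℝ × ℝ)))

/-- `D₂ = -i ∂_y` on tempered distributions on `ℝ²`. -/
def opD2 (u : TD2) : TD2 := Complex.I • (u.comp (LineDeriv.lineDerivOpCLM ℂ 𝓢(ℝ × ℝ, ℂ) ((0, 1) : ℝ × ℝ)))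

/-- The set of pairs `(j, k)` of exponents with `j + k ≤ m`. -/
def idxSet (m : ℕ) : Finset (ℕ × ℕ) :=
  (Finset.range (m + 1) ×ˢ Finset.range (m + 1)).filter (fun jk => jk.1 + jk.2 ≤ m)

/-- The polynomial symbol `a(x,ξ) = Σ_{j+k≤m} c_{jk} x^j ξ^k` as a function on `ℝ²`. -/
def symbolFun (m : ℕ) (c : ℕ → ℕ → ℂ) : ℝ × ℝ → ℂ :=
  fun v => ∑ jk ∈ idxSet m, c jk.1 jk.2 * (v.1 : ℂ) ^ jk.1 * (v.2 : ℂ) ^ jk.2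

/-- A polynomial function `a(x,ξ)` on `ℝ×ℝ` is hypo-elliptic if it does not vanish outside a
compact set and `(|∂ₓ a| + |∂_ξ a|)/|a| → 0` as `|x| + |ξ| → ∞`. -/
def IsHypoelliptic (a : ℝ × ℝ → ℂ) : Prop :=
  (∃ K : Set (ℝ × ℝ), IsCompact K ∧ ∀ v ∉ K, a v ≠ 0) ∧
    Tendsto (fun v : ℝ × ℝ => (‖fderiv ℝ a v (1, 0)‖ + ‖fderiv ℝ a v (0, 1)‖) / ‖a v‖)
      (comap (fun v : ℝ × ℝ => |v.1| + |v.2|) atTop) (nhds 0)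

/-- The differential operator `A = Σ_{j+k≤m} c_{jk} M^j D^k` on tempered distributions
on `ℝ`. -/
def opA (m : ℕ) (c : ℕ → ℕ → ℂ) (u : TD1) : TD1 :=
  ∑ jk ∈ idxSet m, c jk.1 jk.2 • opM^[jk.1] (opD^[jk.2] u)



-- function-level operators on ℝ → ℂ and ℝ × ℝ → ℂ

/-- `D = -i d/dx` acting on functions `ℝ → ℂ`. -/
def cD (u : ℝ → ℂ) : ℝ → ℂ := fun x => -Complex.I * deriv u x

/-- `D₁ = -i ∂ₓ` acting on functions `ℝ × ℝ → ℂ`. -/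
def cD1 (f : ℝ × ℝ → ℂ) : ℝ × ℝ → ℂ := fun v => -Complex.I * fderiv ℝ f v (1, 0)

/-- `D₂ = -i ∂_y` acting on functions `ℝ × ℝ → ℂ`. -/
def cD2 (f : ℝ × ℝ → ℂ) : ℝ × ℝ → ℂ := fun v => -Complex.I * fderiv ℝ f v (0, 1)

/-- The Wigner-like transform with parameter `p`:
`Wig_p[f](x,y) = (2π)^{-1/2} ∫ e^{-izy} f(x+(1-p)z, x-pz) dz`. -/
def Wig (p : ℝ) (f : ℝ × ℝ → ℂ) : ℝ × ℝ → ℂ := fun v =>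
  (((2 * Real.pi) ^ (-(1/2 : ℝ)) : ℝ) : ℂ) *
    ∫ z : ℝ, Complex.exp (-(Complex.I * z * v.2)) * f (v.1 + (1 - p) * z, v.1 - p * z)

-- Weyl-Wick transform on polynomials

open MvPolynomial in
/-- `∂ₓ` on complex polynomials in two variables, as an endomorphism. -/
def pdX : Module.End ℂ (MvPolynomial (Fin 2) ℂ) := (MvPolynomial.pderiv 0).toLinearMap

open MvPolynomial in
/-- `∂_ξ` on complex polynomials in two variables, as an endomorphism. -/
def pdXi : Module.End ℂ (MvPolynomial (Fin 2) ℂ) := (MvPolynomial.pderiv 1).toLinearMap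

/-- The Laplacian `Δ = ∂ₓ² + ∂_ξ²` on complex polynomials in two variables. -/
def pLap : Module.End ℂ (MvPolynomial (Fin 2) ℂ) := pdX ^ 2 + pdXi ^ 2

/-- The Weyl-Wick transform
`W[a] = Σ_{n≥0} ((-1)^n/(4^n n!)) Δ^n Σ_{l≥0} ((-i)^l/(2^l l!)) ∂ₓ^l ∂_ξ^l a`
(all sums are finite on polynomials). -/
def weylWick (a : MvPolynomial (Fin 2) ℂ) : MvPolynomial (Fin 2) ℂ :=
  ∑ n ∈ Finset.range (a.totalDegree + 1), (((-1 : ℂ) ^ n / (4 ^ n * n.factorial)) •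
    (pLap ^ n) (∑ l ∈ Finset.range (a.totalDegree + 1),
      (((-Complex.I) ^ l / (2 ^ l * l.factorial)) • (pdX ^ l) ((pdXi ^ l) a))))

/-- The inverse Weyl-Wick transform
`W⁻¹[a] = Σ_{l≥0} (i^l/(2^l l!)) ∂ₓ^l ∂_ξ^l Σ_{n≥0} (1/(4^n n!)) Δ^n a`. -/
def weylWickInv (a : MvPolynomial (Fin 2) ℂ) : MvPolynomial (Fin 2) ℂ :=
  ∑ l ∈ Finset.range (a.totalDegree + 1), ((Complex.I ^ l / (2 ^ l * l.factorial)) •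
    (pdX ^ l) ((pdXi ^ l) (∑ n ∈ Finset.range (a.totalDegree + 1),
      ((1 / (4 ^ n * n.factorial) : ℂ) • (pLap ^ n) a))))

/-- Evaluation of a complex polynomial in two variables at a point of `ℝ²`. -/
def evalP (a : MvPolynomial (Fin 2) ℂ) (v : ℝ × ℝ) : ℂ :=
  MvPolynomial.eval ![(v.1 : ℂ), (v.2 : ℂ)] a

/-- The polynomial `Σ_{j+k≤m} c_{jk} x^j ξ^k`. -/
def polyOf (m : ℕ) (c : ℕ → ℕ → ℂ) : MvPolynomial (Fin 2) ℂ :=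
  ∑ jk ∈ (Finset.range (m + 1) ×ˢ Finset.range (m + 1)).filter (fun jk => jk.1 + jk.2 ≤ m),
    MvPolynomial.C (c jk.1 jk.2) * MvPolynomial.X 0 ^ jk.1 * MvPolynomial.X 1 ^ jk.2

/-- The coherent state `Φ_{y,η}(x) = π^{-1/4} e^{ixη} e^{-(y-x)²/2}`. -/
def coherent (y η : ℝ) : ℝ → ℂ :=
  fun t => ((Real.pi ^ (-(1/4 : ℝ)) : ℝ) : ℂ) * Complex.exp (Complex.I * t * η) *
    ((Real.exp (-((y - t) ^ 2) / 2) : ℝ) : ℂ)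

/-- The operator `M₁ - q D₂` acting on functions on `ℝ²`. -/
def cE1 (q : ℝ) (f : ℝ × ℝ → ℂ) : ℝ × ℝ → ℂ := fun v => (v.1 : ℂ) * f v - (q : ℂ) * cD2 f v

/-- The operator `M₂ + p D₁` acting on functions on `ℝ²`. -/
def cE2 (p : ℝ) (f : ℝ × ℝ → ℂ) : ℝ × ℝ → ℂ := fun v => (v.2 : ℂ) * f v + (p : ℂ) * cD1 f v

/-- The operator `B = Σ_{j+k≤m} c_{jk} (M₁ - qD₂)^j (M₂ + pD₁)^k` acting on functions
on `ℝ²`. -/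
def opBfun (p q : ℝ) (m : ℕ) (c : ℕ → ℕ → ℂ) (f : ℝ × ℝ → ℂ) : ℝ × ℝ → ℂ :=
  fun v => ∑ jk ∈ idxSet m, c jk.1 jk.2 * ((cE1 q)^[jk.1] ((cE2 p)^[jk.2] f)) v

/-- The operator `(A₁ w)(s,t) = Σ_{j+k≤m} c_{jk} s^j (D_s^k w)(s,t)` acting in the first
variable on functions on `ℝ²`. -/
def opA1fun (m : ℕ) (c : ℕ → ℕ → ℂ) (w : ℝ × ℝ → ℂ) : ℝ × ℝ → ℂ :=
  fun v => ∑ jk ∈ idxSet m, c jk.1 jk.2 * (v.1 : ℂ) ^ jk.1 * (cD1^[jk.2] w) v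

/-- The operator `(A u)(x) = Σ_{j+k≤m} c_{jk} x^j (D^k u)(x)` acting on functions on `ℝ`. -/
def opAfun (m : ℕ) (c : ℕ → ℕ → ℂ) (u : ℝ → ℂ) : ℝ → ℂ :=
  fun x => ∑ jk ∈ idxSet m, c jk.1 jk.2 * (x : ℂ) ^ jk.1 * (cD^[jk.2] u) x



/-!
Substituting `(s, t) = (x + q z, x - p z)`, a linear change of variables of Jacobian `-1`,
`Wig_p[w]` becomes the Fourier transform in the second variable,
`F g (x, y) = ∫ e^{-izy} g(x, z) dz`, of the Schwartz function
`g(x, z) = (2π)^{-1/2} w(x + qz, x - pz)`. Differentiating under the integral sign, and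
integrating by parts in `z`, `F` carries multiplication by `x` and `z` to `M₁` and `-D₂`, and
`D_x`, `D_z` to `D₁` and `M₂`. In the new variables `s = x + qz` and `D_s = p D_x + D_z`, so `F`
carries `s` to `M₁ - qD₂` and `D_s` to `M₂ + pD₁`; iterating and summing gives the theorem.
-/

open LineDeriv ContinuousLinearMap

namespace SchwartzMap

lemma norm_le_mul_inv_one_add_sq_snd {F : Type*} [NormedAddCommGroup F] [NormedSpace ℝ F]
    (f : 𝓢(ℝ × ℝ, F)) : ∃ C, ∀ x z : ℝ, ‖f (x, z)‖ ≤ C * (1 + z ^ 2)⁻¹ := by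
  refine ⟨2 ^ 2 * (Finset.Iic (2, 0)).sup (fun m => SchwartzMap.seminorm ℝ m.1 m.2) f,
    fun x z => ?_⟩
  have hf := one_add_le_sup_seminorm_apply (𝕜 := ℝ) (m := (2, 0)) le_rfl le_rfl f (x, z)
  rw [norm_iteratedFDeriv_zero] at hf
  have hz : 1 + z ^ 2 ≤ (1 + ‖(x, z)‖) ^ 2 := by
    have hzx : |z| ≤ ‖(x, z)‖ := norm_snd_le (x, z)
    nlinarith [abs_nonneg z, sq_abs z]
  rw [le_mul_inv_iff₀ (by positivity), mul_comm]
  exact (mul_le_mul_of_nonneg_right hz (norm_nonneg _)).trans hf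

lemma integrable_comp_mk {F : Type*} [NormedAddCommGroup F] [NormedSpace ℝ F]
    (f : 𝓢(ℝ × ℝ, F)) (x : ℝ) : Integrable fun z : ℝ => f (x, z) := by
  obtain ⟨C, hC⟩ := f.norm_le_mul_inv_one_add_sq_snd
  exact (integrable_inv_one_add_sq.const_mul C).mono' (by fun_prop)
    (.of_forall fun z => hC x z)

end SchwartzMap

lemma norm_exp_neg_I_mul (z y : ℝ) : ‖Complex.exp (-(Complex.I * z * y))‖ = 1 := by
  rw [show -(Complex.I * z * y) = ((-(z * y) : ℝ) : ℂ) * Complex.I by push_cast; ring]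
  exact Complex.norm_exp_ofReal_mul_I _

lemma integrable_exp_mul_comp_mk (g : 𝓢(ℝ × ℝ, ℂ)) (x y : ℝ) :
    Integrable fun z : ℝ => Complex.exp (-(Complex.I * z * y)) * g (x, z) :=
  (g.integrable_comp_mk x).bdd_mul (c := 1) (by fun_prop)
    (.of_forall fun z => (norm_exp_neg_I_mul z y).le)

def partialFourier : 𝓢(ℝ × ℝ, ℂ) →ₗ[ℂ] (ℝ × ℝ → ℂ) where
  toFun g v := ∫ z : ℝ, Complex.exp (-(Complex.I * z * v.2)) * g (v.1, z)
  map_add' f g := funext fun v => by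
    simp only [add_apply, mul_add, Pi.add_apply]
    exact integral_add (integrable_exp_mul_comp_mk f v.1 v.2)
      (integrable_exp_mul_comp_mk g v.1 v.2)
  map_smul' c g := funext fun v => by
    simp only [smul_apply, smul_eq_mul, mul_left_comm _ c, Pi.smul_apply, RingHom.id_apply]
    exact integral_const_mul c _

lemma partialFourier_apply (g : 𝓢(ℝ × ℝ, ℂ)) (v : ℝ × ℝ) :
    partialFourier g v = ∫ z : ℝ, Complex.exp (-(Complex.I * z * v.2)) * g (v.1, z) := rfl

def partialFourierFDerivIntegrand (g : 𝓢(ℝ × ℝ, ℂ)) (u : ℝ × ℝ) (z : ℝ) : ℝ × ℝ →L[ℝ] ℂ :=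
  Complex.exp (-(Complex.I * z * u.2)) • (fderiv ℝ g (u.1, z)).comp ((fst ℝ ℝ ℝ).prod 0) +
    g (u.1, z) • Complex.exp (-(Complex.I * z * u.2)) • (-(Complex.I * z)) •
      (ofRealCLM ∘L snd ℝ ℝ ℝ)

lemma hasFDerivAt_exp_mul_comp_mk (g : 𝓢(ℝ × ℝ, ℂ)) (z : ℝ) (u : ℝ × ℝ) :
    HasFDerivAt (fun u : ℝ × ℝ => Complex.exp (-(Complex.I * z * u.2)) * g (u.1, z))
      (partialFourierFDerivIntegrand g u z) u := by
  have hexp : HasFDerivAt (fun u : ℝ × ℝ => -(Complex.I * z * u.2))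
      ((-(Complex.I * z)) • (ofRealCLM ∘L snd ℝ ℝ ℝ)) u := by
    have h := (ofRealCLM.hasFDerivAt.comp u (hasFDerivAt_snd (p := u))).const_mul
      (-(Complex.I * z))
    simpa only [Function.comp_def, ofRealCLM_apply, neg_mul, mul_assoc] using h
  have hg : HasFDerivAt (fun u : ℝ × ℝ => g (u.1, z))
      ((fderiv ℝ g (u.1, z)).comp ((fst ℝ ℝ ℝ).prod 0)) u :=
    (g.hasFDerivAt (u.1, z)).comp u (hasFDerivAt_fst.prodMk (hasFDerivAt_const z u))
  exact hexp.cexp.mul hg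

lemma norm_partialFourierFDerivIntegrand_le (g : 𝓢(ℝ × ℝ, ℂ)) (u : ℝ × ℝ) (z : ℝ) :
    ‖partialFourierFDerivIntegrand g u z‖ ≤ ‖fderiv ℝ g (u.1, z)‖ + |z| * ‖g (u.1, z)‖ := by
  refine (norm_add_le _ _).trans (add_le_add ?_ ?_)
  · rw [norm_smul, norm_exp_neg_I_mul, one_mul]
    refine (opNorm_comp_le _ _).trans (mul_le_of_le_one_right (norm_nonneg _) ?_)
    exact opNorm_le_bound _ zero_le_one fun h => by simpa using norm_fst_le h
  · rw [norm_smul, norm_smul, norm_exp_neg_I_mul, norm_smul, norm_neg, norm_mul, Complex.norm_I,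
      Complex.norm_real, Real.norm_eq_abs, one_mul, one_mul]
    have : ‖ofRealCLM ∘L snd ℝ ℝ ℝ‖ ≤ 1 :=
      opNorm_le_bound _ zero_le_one fun h => by simpa using norm_snd_le h
    calc ‖g (u.1, z)‖ * (|z| * ‖ofRealCLM ∘L snd ℝ ℝ ℝ‖)
        ≤ ‖g (u.1, z)‖ * (|z| * 1) := by gcongr
      _ = |z| * ‖g (u.1, z)‖ := by ring

lemma exists_norm_partialFourierFDerivIntegrand_le (g : 𝓢(ℝ × ℝ, ℂ)) :
    ∃ C, ∀ u z, ‖partialFourierFDerivIntegrand g u z‖ ≤ C * (1 + z ^ 2)⁻¹ := by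
  obtain ⟨C₁, hC₁⟩ := (SchwartzMap.fderivCLM ℝ (ℝ × ℝ) ℂ g).norm_le_mul_inv_one_add_sq_snd
  obtain ⟨C₂, hC₂⟩ := (mulCLM hasTemperateGrowth_coord2 g).norm_le_mul_inv_one_add_sq_snd
  refine ⟨C₁ + C₂, fun u z => (norm_partialFourierFDerivIntegrand_le g u z).trans ?_⟩
  have h₁ := hC₁ u.1 z
  have h₂ := hC₂ u.1 z
  rw [SchwartzMap.fderivCLM_apply] at h₁
  rw [mulCLM_apply, norm_mul, Complex.norm_real, Real.norm_eq_abs] at h₂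
  linarith

lemma continuous_partialFourierFDerivIntegrand (g : 𝓢(ℝ × ℝ, ℂ)) (v : ℝ × ℝ) :
    Continuous (partialFourierFDerivIntegrand g v) := by
  have : Continuous (fderiv ℝ g) := (SchwartzMap.fderivCLM ℝ (ℝ × ℝ) ℂ g).continuous
  have := g.continuous
  unfold partialFourierFDerivIntegrand
  fun_prop

lemma integrable_partialFourierFDerivIntegrand (g : 𝓢(ℝ × ℝ, ℂ)) (v : ℝ × ℝ) :
    Integrable (partialFourierFDerivIntegrand g v) := by
  obtain ⟨C, hC⟩ := exists_norm_partialFourierFDerivIntegrand_le g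
  exact (integrable_inv_one_add_sq.const_mul C).mono'
    (continuous_partialFourierFDerivIntegrand g v).aestronglyMeasurable (.of_forall (hC v))

lemma hasFDerivAt_partialFourier (g : 𝓢(ℝ × ℝ, ℂ)) (v : ℝ × ℝ) :
    HasFDerivAt (partialFourier g) (∫ z, partialFourierFDerivIntegrand g v z) v := by
  obtain ⟨C, hC⟩ := exists_norm_partialFourierFDerivIntegrand_le g
  exact hasFDerivAt_integral_of_dominated_of_fderiv_le Filter.univ_mem
    (.of_forall fun u => (integrable_exp_mul_comp_mk g u.1 u.2).aestronglyMeasurable)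
    (integrable_exp_mul_comp_mk g v.1 v.2)
    (continuous_partialFourierFDerivIntegrand g v).aestronglyMeasurable
    (.of_forall fun z u _ => hC u z) (integrable_inv_one_add_sq.const_mul C)
    (.of_forall fun z u _ => hasFDerivAt_exp_mul_comp_mk g z u)

def schwartzM1 : 𝓢(ℝ × ℝ, ℂ) →L[ℂ] 𝓢(ℝ × ℝ, ℂ) := mulCLM hasTemperateGrowth_coord1

def schwartzM2 : 𝓢(ℝ × ℝ, ℂ) →L[ℂ] 𝓢(ℝ × ℝ, ℂ) := mulCLM hasTemperateGrowth_coord2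

def schwartzD1 : 𝓢(ℝ × ℝ, ℂ) →L[ℂ] 𝓢(ℝ × ℝ, ℂ) :=
  -Complex.I • lineDerivOpCLM ℂ 𝓢(ℝ × ℝ, ℂ) ((1 : ℝ), (0 : ℝ))

def schwartzD2 : 𝓢(ℝ × ℝ, ℂ) →L[ℂ] 𝓢(ℝ × ℝ, ℂ) :=
  -Complex.I • lineDerivOpCLM ℂ 𝓢(ℝ × ℝ, ℂ) ((0 : ℝ), (1 : ℝ))

lemma schwartzM1_apply (f : 𝓢(ℝ × ℝ, ℂ)) (v : ℝ × ℝ) : schwartzM1 f v = f v * v.1 := rfl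

lemma schwartzM2_apply (f : 𝓢(ℝ × ℝ, ℂ)) (v : ℝ × ℝ) : schwartzM2 f v = f v * v.2 := rfl

lemma schwartzD1_apply (f : 𝓢(ℝ × ℝ, ℂ)) (v : ℝ × ℝ) :
    schwartzD1 f v = -Complex.I * fderiv ℝ f v (1, 0) := rfl

lemma schwartzD2_apply (f : 𝓢(ℝ × ℝ, ℂ)) (v : ℝ × ℝ) :
    schwartzD2 f v = -Complex.I * fderiv ℝ f v (0, 1) := rfl

lemma cD1_partialFourier (g : 𝓢(ℝ × ℝ, ℂ)) :
    cD1 (partialFourier g) = partialFourier (schwartzD1 g) := by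
  funext v
  rw [cD1, (hasFDerivAt_partialFourier g v).fderiv,
    integral_apply (integrable_partialFourierFDerivIntegrand g v), partialFourier_apply,
    ← integral_const_mul]
  congr 1 with z
  simp [partialFourierFDerivIntegrand, schwartzD1_apply]
  ring

lemma cD2_partialFourier (g : 𝓢(ℝ × ℝ, ℂ)) :
    cD2 (partialFourier g) = -partialFourier (schwartzM2 g) := by
  funext v
  rw [cD2, (hasFDerivAt_partialFourier g v).fderiv,
    integral_apply (integrable_partialFourierFDerivIntegrand g v), Pi.neg_apply,
    partialFourier_apply, ← integral_const_mul, ← integral_neg]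
  congr 1 with z
  simp [partialFourierFDerivIntegrand, schwartzM2_apply, Prod.mk_zero_zero]
  ring_nf
  simp [Complex.I_sq]

lemma fst_mul_partialFourier (g : 𝓢(ℝ × ℝ, ℂ)) (v : ℝ × ℝ) :
    v.1 * partialFourier g v = partialFourier (schwartzM1 g) v := by
  rw [partialFourier_apply, partialFourier_apply, ← integral_const_mul]
  congr 1 with z
  rw [schwartzM1_apply]
  ring

lemma snd_mul_partialFourier (g : 𝓢(ℝ × ℝ, ℂ)) (v : ℝ × ℝ) :
    v.2 * partialFourier g v = partialFourier (schwartzD2 g) v := by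
  obtain ⟨x, y⟩ := v
  have hexp : ∀ z : ℝ, HasDerivAt (fun z : ℝ => Complex.exp (-(Complex.I * z * y)))
      (Complex.exp (-(Complex.I * z * y)) * (-(Complex.I * y))) z := fun z => by
    have := ((hasDerivAt_id (z : ℂ)).mul_const (Complex.I * y)).neg.cexp.comp_ofReal
    simpa [mul_comm, mul_left_comm, mul_assoc] using this
  have hg : ∀ z : ℝ, HasDerivAt (fun z : ℝ => g (x, z)) (∂_{((0 : ℝ), (1 : ℝ))} g (x, z)) z :=
    fun z => (g.hasFDerivAt (x, z)).comp_hasDerivAt z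
      ((hasDerivAt_const z x).prodMk (hasDerivAt_id z))
  have hparts := integral_mul_deriv_eq_deriv_mul_of_integrable (fun z _ => hexp z)
    (fun z _ => hg z) (integrable_exp_mul_comp_mk _ x y)
    (((integrable_exp_mul_comp_mk g x y).const_mul (-(Complex.I * y))).congr
      (.of_forall fun z => by simp only [Pi.mul_apply]; ring))
    (integrable_exp_mul_comp_mk g x y)
  simp only [partialFourier_apply, schwartzD2_apply, mul_left_comm _ (-Complex.I),
    integral_const_mul]
  simp only [← lineDerivOp_apply_eq_fderiv, hparts, mul_right_comm _ (-(Complex.I * y)),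
    integral_mul_const]
  ring_nf
  simp [Complex.I_sq]

lemma cE1_partialFourier (q : ℝ) (g : 𝓢(ℝ × ℝ, ℂ)) :
    cE1 q (partialFourier g) = partialFourier (schwartzM1 g + (q : ℂ) • schwartzM2 g) := by
  funext v
  simp only [cE1, cD2_partialFourier, fst_mul_partialFourier, map_add, map_smul, Pi.add_apply,
    Pi.neg_apply, Pi.smul_apply, smul_eq_mul]
  ring

lemma cE2_partialFourier (p : ℝ) (g : 𝓢(ℝ × ℝ, ℂ)) :
    cE2 p (partialFourier g) = partialFourier (schwartzD2 g + (p : ℂ) • schwartzD1 g) := by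
  funext v
  simp only [cE2, cD1_partialFourier, snd_mul_partialFourier, map_add, map_smul, Pi.add_apply,
    Pi.smul_apply, smul_eq_mul]

def wigCoord (p : ℝ) : (ℝ × ℝ) ≃L[ℝ] (ℝ × ℝ) :=
  LinearEquiv.toContinuousLinearEquiv (E := ℝ × ℝ) (𝕜 := ℝ)
    { toFun u := (u.1 + (1 - p) * u.2, u.1 - p * u.2)
      invFun v := (p * v.1 + (1 - p) * v.2, v.1 - v.2)
      map_add' u u' := by ext <;> simp <;> ring
      map_smul' c u := by ext <;> simp <;> ring
      left_inv u := by ext <;> simp <;> ring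
      right_inv v := by ext <;> simp <;> ring }

lemma wigCoord_apply (p : ℝ) (u : ℝ × ℝ) :
    wigCoord p u = (u.1 + (1 - p) * u.2, u.1 - p * u.2) := rfl

def wigAmplitude (p : ℝ) : 𝓢(ℝ × ℝ, ℂ) →L[ℂ] 𝓢(ℝ × ℝ, ℂ) :=
  (((2 * Real.pi) ^ (-(1/2 : ℝ)) : ℝ) : ℂ) • compCLMOfContinuousLinearEquiv ℂ (wigCoord p)

lemma wigAmplitude_apply (p : ℝ) (w : 𝓢(ℝ × ℝ, ℂ)) (u : ℝ × ℝ) :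
    wigAmplitude p w u = (((2 * Real.pi) ^ (-(1/2 : ℝ)) : ℝ) : ℂ) * w (wigCoord p u) := rfl

lemma Wig_eq_partialFourier (p : ℝ) (w : 𝓢(ℝ × ℝ, ℂ)) :
    Wig p ⇑w = partialFourier (wigAmplitude p w) := by
  funext v
  simp only [Wig, partialFourier_apply, wigAmplitude_apply, wigCoord_apply,
    mul_left_comm _ (((2 * Real.pi) ^ (-(1/2 : ℝ)) : ℝ) : ℂ), integral_const_mul]

lemma schwartzM_wigAmplitude (p : ℝ) (w : 𝓢(ℝ × ℝ, ℂ)) :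
    schwartzM1 (wigAmplitude p w) + ((1 - p : ℝ) : ℂ) • schwartzM2 (wigAmplitude p w) =
      wigAmplitude p (schwartzM1 w) := by
  ext u
  simp only [add_apply, smul_apply, smul_eq_mul, schwartzM1_apply, schwartzM2_apply,
    wigAmplitude_apply, wigCoord_apply]
  push_cast
  ring

lemma schwartzD_wigAmplitude (p : ℝ) (w : 𝓢(ℝ × ℝ, ℂ)) :
    schwartzD2 (wigAmplitude p w) + (p : ℂ) • schwartzD1 (wigAmplitude p w) =
      wigAmplitude p (schwartzD1 w) := by
  have hdir :
      ∂_{((1 : ℝ), (0 : ℝ))} w = ∂_{wigCoord p (0, 1)} w + p • ∂_{wigCoord p (1, 0)} w := by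
    rw [← lineDerivOp_left_smul, ← lineDerivOp_left_add]
    congr 1
    ext <;> simp [wigCoord_apply]
  simp only [schwartzD1, schwartzD2, wigAmplitude, smul_apply,
    lineDerivOpCLM_apply, lineDerivOp_smul, lineDerivOp_compCLMOfContinuousLinearEquiv]
  rw [hdir]
  ext u
  simp only [add_apply, smul_apply, compCLMOfContinuousLinearEquiv_apply, Function.comp_apply,
    smul_eq_mul, Complex.real_smul]
  ring

lemma Wig_schwartzM1 (p : ℝ) (w : 𝓢(ℝ × ℝ, ℂ)) :
    Wig p ⇑(schwartzM1 w) = cE1 (1 - p) (Wig p ⇑w) := by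
  rw [Wig_eq_partialFourier, Wig_eq_partialFourier, cE1_partialFourier, schwartzM_wigAmplitude]

lemma Wig_schwartzD1 (p : ℝ) (w : 𝓢(ℝ × ℝ, ℂ)) :
    Wig p ⇑(schwartzD1 w) = cE2 p (Wig p ⇑w) := by
  rw [Wig_eq_partialFourier, Wig_eq_partialFourier, cE2_partialFourier, schwartzD_wigAmplitude]

lemma Wig_iterate (p : ℝ) (j k : ℕ) (w : 𝓢(ℝ × ℝ, ℂ)) :
    Wig p ⇑(schwartzM1^[j] (schwartzD1^[k] w)) = (cE1 (1 - p))^[j] ((cE2 p)^[k] (Wig p ⇑w)) := by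
  have hM : Function.Semiconj (fun w : 𝓢(ℝ × ℝ, ℂ) => Wig p ⇑w) schwartzM1 (cE1 (1 - p)) :=
    Wig_schwartzM1 p
  have hD : Function.Semiconj (fun w : 𝓢(ℝ × ℝ, ℂ) => Wig p ⇑w) schwartzD1 (cE2 p) :=
    Wig_schwartzD1 p
  rw [(hM.iterate_right j).eq, (hD.iterate_right k).eq]

lemma iterate_schwartzM1_apply (j : ℕ) (f : 𝓢(ℝ × ℝ, ℂ)) (v : ℝ × ℝ) :
    (schwartzM1^[j] f) v = v.1 ^ j * f v := by
  induction j with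
  | zero => simp
  | succ j ih => rw [Function.iterate_succ_apply', schwartzM1_apply, ih]; ring

lemma coe_iterate_schwartzD1 (k : ℕ) (f : 𝓢(ℝ × ℝ, ℂ)) : ⇑(schwartzD1^[k] f) = cD1^[k] ⇑f := by
  induction k with
  | zero => rfl
  | succ k ih =>
    rw [Function.iterate_succ_apply', Function.iterate_succ_apply', ← ih]
    rfl

/-- For `p ∈ ℝ`, `q = 1 - p`, the Wigner-like transform intertwines the
operator `A₁ = Σ_{j+k≤m} c_{jk} s^j D_s^k` acting in the first variable with
`B = Σ_{j+k≤m} c_{jk} (M₁ - qD₂)^j (M₂ + pD₁)^k`: one has `B(Wig_p[w]) = Wig_p[A₁ w]`. -/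
theorem statement16 (p q : ℝ) (hq : q = 1 - p) (m : ℕ) (c : ℕ → ℕ → ℂ) (w : 𝓢(ℝ × ℝ, ℂ)) :
    opBfun p q m c (Wig p ⇑w) = Wig p (opA1fun m c ⇑w) := by
  subst hq
  have hA : opA1fun m c ⇑w =
      ⇑(∑ jk ∈ idxSet m, c jk.1 jk.2 • schwartzM1^[jk.1] (schwartzD1^[jk.2] w)) := by
    funext v
    simp only [opA1fun, sum_apply, smul_apply, smul_eq_mul, iterate_schwartzM1_apply,
      coe_iterate_schwartzD1, mul_assoc]
  funext v
  simp only [opBfun, ← Wig_iterate, hA]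
  simp only [Wig_eq_partialFourier, map_sum, map_smul, Finset.sum_apply, Pi.smul_apply,
    smul_eq_mul]

end
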